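/- Fix p > 1 − (1/2)^{1/2} and a constant M ≥ 0. With probability tending to 1 as n → ∞, no 3-face of Q^n contains two distinct edges of Q_2(n,p) that both have degree at most M. -/

import Mathlib

open Finset

/-- The 1-skeleton of the `n`-dimensional cube. -/
def cubeGraph (n : ℕ) : SimpleGraph (Fin n → Bool) where
  Adj u v := (Finset.univ.filter fun i => u i ≠ v i).card = 1
  symm := by
    constructor
    intro u v h
    rw [show (Finset.univ.filter fun i => v i ≠ u i)
        = (Finset.univ.filter fun i => u i ≠ v i) from
      Finset.filter_congr fun i _ => ne_comm]
    exact h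
  loopless := by
    constructor
    intro u h
    simp at h

instance cubeGraphAdjDec (n : ℕ) : DecidableRel (cubeGraph n).Adj := fun u v =>
  decidable_of_iff ((Finset.univ.filter fun i => u i ≠ v i).card = 1) Iff.rfl

/-- A 2-face of the `n`-cube in star notation: two free (`none`) coordinates and
`n-2` fixed binary coordinates. Its boundary is a 4-cycle. -/
abbrev TwoFace (n : ℕ) :=
  {x : Fin n → Option Bool // (Finset.univ.filter fun i => x i = none).card = 2}

/-- A vertex `v` of the cube lies on a face `x` (in star notation) iff `v` agrees
with every fixed coordinate of `x`. -/
def inFace {n : ℕ} (x : Fin n → Option Bool) (v : Fin n → Bool) : Prop :=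
  ∀ i b, x i = some b → v i = b

instance {n : ℕ} (x : Fin n → Option Bool) (v : Fin n → Bool) : Decidable (inFace x v) := by
  unfold inFace; infer_instance


/-- The probability, in the random 2-dimensional cubical complex `Q_2(n,p)` (each 2-face
included independently with probability `p`), of seeing exactly the configuration `ω`
of 2-faces. -/
def faceProb (n : ℕ) (p : ℝ) (ω : TwoFace n → Bool) : ℝ :=
  ∏ x : TwoFace n, if ω x then p else 1 - p

/-- A 3-face of the `n`-cube in star notation. -/
abbrev ThreeFace (n : ℕ) :=
  {x : Fin n → Option Bool // (Finset.univ.filter fun i => x i = none).card = 3}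

/-- The degree of the edge `e` in the complex with face configuration `ω`: the number of
included 2-faces containing `e`. -/
def edgeDeg (n : ℕ) (ω : TwoFace n → Bool) (e : Sym2 (Fin n → Bool)) : ℕ :=
  (Finset.univ.filter fun x : TwoFace n => ω x = true ∧ ∀ v, v ∈ e → inFace x.1 v).card

/-!
An edge of `Q^n` lies in `n - 1` two-faces and two distinct edges share at most one, so two
distinct edges of a 3-face lie in at least `2n - 3` two-faces altogether. Both edges are light only
if at most `2M` of these are present, i.e. some `2n - 3 - 2M` of them are absent; a union bound over
the choice of the absent ones gives probability at most `(2n)^{2M} (1-p)^{2n-3-2M}`. There are at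
most `4096 n^3 2^n` choices of a 3-face and two of its edges, and `n^{O(1)} 2^n (1-p)^{2n} → 0`
since `2 (1-p)^2 < 1`.
-/

open scoped Classical

open Filter Topology

section Faces

variable {n : ℕ}

def freeSet (x : Fin n → Option Bool) : Finset (Fin n) :=
  univ.filter fun i => x i = none

@[simp] lemma mem_freeSet {x : Fin n → Option Bool} {i : Fin n} :
    i ∈ freeSet x ↔ x i = none := by
  simp [freeSet]

lemma inFace.apply_eq_some {x : Fin n → Option Bool} {v : Fin n → Bool} (hv : inFace x v)
    {i : Fin n} (hi : i ∉ freeSet x) : x i = some (v i) := by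
  obtain ⟨b, hb⟩ := Option.ne_none_iff_exists'.mp (mem_freeSet.not.mp hi)
  rw [hb, hv i b hb]

lemma inFace.mem_freeSet_of_ne {x : Fin n → Option Bool} {u v : Fin n → Bool}
    (hu : inFace x u) (hv : inFace x v) {i : Fin n} (hi : u i ≠ v i) : i ∈ freeSet x := by
  by_contra h
  exact hi (Option.some_injective _ ((hu.apply_eq_some h).symm.trans (hv.apply_eq_some h)))

lemma eq_of_freeSet_eq {x y : Fin n → Option Bool} {v : Fin n → Bool} (hx : inFace x v)
    (hy : inFace y v) (h : freeSet x = freeSet y) : x = y := by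
  funext i
  by_cases hi : i ∈ freeSet x
  · rw [mem_freeSet.mp hi, eq_comm, ← mem_freeSet, ← h]
    exact hi
  · rw [hx.apply_eq_some hi, hy.apply_eq_some (h ▸ hi)]

lemma card_vertices_le (x : Fin n → Option Bool) :
    (univ.filter (inFace x)).card ≤ 2 ^ (freeSet x).card := by
  have hinj : Set.InjOn (fun v : Fin n → Bool => fun i : freeSet x => v i)
      (univ.filter (inFace x) : Set (Fin n → Bool)) := by
    intro u hu v hv huv
    simp only [coe_filter, mem_univ, true_and, Set.mem_ofPred_eq] at hu hv
    by_contra hne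
    obtain ⟨i, hi⟩ := Function.ne_iff.mp hne
    exact hi (congrFun huv ⟨i, hu.mem_freeSet_of_ne hv hi⟩)
  calc (univ.filter (inFace x)).card ≤ (univ : Finset (freeSet x → Bool)).card :=
        card_le_card_of_injOn _ (fun _ _ => mem_univ _) hinj
    _ = 2 ^ (freeSet x).card := by rw [card_univ, Fintype.card_fun, Fintype.card_coe]; simp

lemma card_faces_le (d : ℕ) :
    Fintype.card {x : Fin n → Option Bool // (freeSet x).card = d} ≤ n.choose d * 2 ^ n := by
  let f : {x : Fin n → Option Bool // (freeSet x).card = d} →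
      {s : Finset (Fin n) // s.card = d} × (Fin n → Bool) :=
    fun x => (⟨freeSet x.1, x.2⟩, fun i => (x.1 i).getD false)
  have hv : ∀ x : Fin n → Option Bool, inFace x fun i => (x i).getD false := by
    intro x i b hb
    simp [hb]
  have hf : Function.Injective f := by
    intro x y hxy
    simp only [f, Prod.mk.injEq, Subtype.mk.injEq] at hxy
    exact Subtype.ext (eq_of_freeSet_eq (hv x.1) (hxy.2 ▸ hv y.1) hxy.1)
  simpa using Fintype.card_le_of_injective f hf

def spanFace (u : Fin n → Bool) (s : Finset (Fin n)) : Fin n → Option Bool :=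
  fun i => if i ∈ s then none else some (u i)

@[simp] lemma freeSet_spanFace (u : Fin n → Bool) (s : Finset (Fin n)) :
    freeSet (spanFace u s) = s := by
  ext i
  simp [spanFace]

lemma inFace_spanFace {u v : Fin n → Bool} {s : Finset (Fin n)} (h : ∀ i ∉ s, v i = u i) :
    inFace (spanFace u s) v := by
  intro i b hb
  by_cases hi : i ∈ s
  · simp [spanFace, hi] at hb
  · simp only [spanFace, hi, if_false, Option.some.injEq] at hb
    rw [h i hi, hb]

end Faces

section Edges

variable {n : ℕ}

lemma cubeGraph_adj_iff {u v : Fin n → Bool} :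
    (cubeGraph n).Adj u v ↔ ∃ j, ∀ i, u i ≠ v i ↔ i = j := by
  simp only [cubeGraph, card_eq_one, Finset.ext_iff, mem_filter, mem_univ, true_and,
    mem_singleton]

lemma exists_eq_of_mem_edgeFinset {e : Sym2 (Fin n → Bool)} (he : e ∈ (cubeGraph n).edgeFinset) :
    ∃ u v j, e = s(u, v) ∧ ∀ i, u i ≠ v i ↔ i = j := by
  induction e using Sym2.ind with
  | _ u v =>
    obtain ⟨j, hj⟩ := cubeGraph_adj_iff.mp (SimpleGraph.mem_edgeFinset.mp he)
    exact ⟨u, v, j, rfl, hj⟩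

def cofaces (e : Sym2 (Fin n → Bool)) : Finset (TwoFace n) :=
  univ.filter fun x => ∀ v ∈ e, inFace x.1 v

lemma edgeDeg_eq_card_filter_cofaces (ω : TwoFace n → Bool) (e : Sym2 (Fin n → Bool)) :
    edgeDeg n ω e = ((cofaces e).filter fun x => ω x = true).card := by
  simp only [edgeDeg, cofaces, filter_filter, and_comm]

lemma le_card_cofaces {e : Sym2 (Fin n → Bool)} (he : e ∈ (cubeGraph n).edgeFinset) :
    n - 1 ≤ (cofaces e).card := by
  obtain ⟨u, v, j, rfl, huv⟩ := exists_eq_of_mem_edgeFinset he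
  let f : {k // k ≠ j} → TwoFace n := fun k =>
    ⟨spanFace u {j, k.1}, by
      show (freeSet _).card = 2
      rw [freeSet_spanFace, card_pair k.2.symm]⟩
  have hf : ∀ k ∈ (univ : Finset {k // k ≠ j}), f k ∈ cofaces s(u, v) := by
    intro k _
    simp only [cofaces, mem_filter, mem_univ, true_and, Sym2.mem_iff, forall_eq_or_imp,
      forall_eq]
    refine ⟨inFace_spanFace fun _ _ => rfl, inFace_spanFace fun i hi => ?_⟩
    by_contra h
    exact hi (by simp [(huv i).mp (Ne.symm h)])
  have hinj : Set.InjOn f (univ : Finset {k // k ≠ j}) := by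
    intro k _ k' _ hkk'
    have h := congrArg (fun x : TwoFace n => freeSet x.1) hkk'
    simp only [f, freeSet_spanFace] at h
    have hk : k.1 ∈ ({j, k'.1} : Finset (Fin n)) := h ▸ mem_insert_of_mem (mem_singleton_self _)
    simp only [mem_insert, mem_singleton, k.2, false_or] at hk
    exact Subtype.ext hk
  calc n - 1 = (univ : Finset {k // k ≠ j}).card := by simp
    _ ≤ (cofaces s(u, v)).card := card_le_card_of_injOn f hf hinj

lemma exists_ne_of_notMem_edge {u v w : Fin n → Bool} {j : Fin n}
    (huv : ∀ i, u i ≠ v i ↔ i = j) (hw : w ∉ s(u, v)) : ∃ k ≠ j, u k ≠ w k := by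
  by_contra! h
  simp only [Sym2.mem_iff, not_or] at hw
  by_cases hj : u j = w j
  · exact hw.1 (funext fun i => if hi : i = j then hi ▸ hj.symm else (h i hi).symm)
  · refine hw.2 (funext fun i => ?_)
    by_cases hi : i = j
    · subst hi
      have := (huv i).mpr rfl
      revert hj this
      cases u i <;> cases v i <;> cases w i <;> simp
    · rw [← h i hi]
      exact not_not.mp (mt (huv i).mp hi)

lemma freeSet_eq_pair {x : TwoFace n} {j k : Fin n} (hjk : j ≠ k) (hj : j ∈ freeSet x.1)
    (hk : k ∈ freeSet x.1) : freeSet x.1 = {j, k} :=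
  (eq_of_subset_of_card_le (insert_subset hj (singleton_subset_iff.mpr hk))
    (by rw [card_pair hjk]; exact x.2.le)).symm

/-- Two distinct edges span at least three vertices, and a 2-face is determined by three of its
vertices. -/
lemma card_cofaces_inter_le_one {e₁ e₂ : Sym2 (Fin n → Bool)}
    (h₁ : e₁ ∈ (cubeGraph n).edgeFinset) (h₂ : e₂ ∈ (cubeGraph n).edgeFinset) (hne : e₁ ≠ e₂) :
    (cofaces e₁ ∩ cofaces e₂).card ≤ 1 := by
  obtain ⟨u, v, j, rfl, huv⟩ := exists_eq_of_mem_edgeFinset h₁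
  obtain ⟨a, b, -, rfl, -⟩ := exists_eq_of_mem_edgeFinset h₂
  obtain ⟨w, hw₂, hw₁⟩ : ∃ w ∈ s(a, b), w ∉ s(u, v) := by
    by_contra! h
    have hne' : a ≠ b := (cubeGraph n).ne_of_adj (by simpa using h₂)
    exact hne ((Sym2.mem_and_mem_iff hne').mp
      ⟨h a (Sym2.mem_mk_left a b), h b (Sym2.mem_mk_right a b)⟩)
  obtain ⟨k, hkj, hk⟩ := exists_ne_of_notMem_edge huv hw₁
  have hfree : ∀ x ∈ cofaces s(u, v) ∩ cofaces s(a, b), freeSet x.1 = {j, k} := by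
    intro x hx
    simp only [cofaces, mem_inter, mem_filter, mem_univ, true_and] at hx
    have hu := hx.1 u (Sym2.mem_mk_left u v)
    exact freeSet_eq_pair hkj.symm
      (hu.mem_freeSet_of_ne (hx.1 v (Sym2.mem_mk_right u v)) ((huv j).mpr rfl))
      (hu.mem_freeSet_of_ne (hx.2 w hw₂) hk)
  refine card_le_one.mpr fun x hx y hy => Subtype.ext ?_
  have hxu := (mem_filter.mp (mem_inter.mp hx).1).2 u (Sym2.mem_mk_left u v)
  have hyu := (mem_filter.mp (mem_inter.mp hy).1).2 u (Sym2.mem_mk_left u v)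
  exact eq_of_freeSet_eq hxu hyu ((hfree x hx).trans (hfree y hy).symm)

def edgesIn (x : Fin n → Option Bool) : Finset (Sym2 (Fin n → Bool)) :=
  (cubeGraph n).edgeFinset.filter fun e => ∀ v ∈ e, inFace x v

lemma card_edgesIn_le (x : Fin n → Option Bool) :
    (edgesIn x).card ≤ (2 ^ (freeSet x).card) ^ 2 := by
  set V := univ.filter (inFace x)
  have hsub : edgesIn x ⊆ (V ×ˢ V).image fun p => s(p.1, p.2) := by
    intro e he
    induction e using Sym2.ind with
    | _ u v =>
      have h := (mem_filter.mp he).2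
      exact mem_image.mpr ⟨(u, v), mem_product.mpr
        ⟨by simpa [V] using h u (Sym2.mem_mk_left u v),
          by simpa [V] using h v (Sym2.mem_mk_right u v)⟩, rfl⟩
  calc (edgesIn x).card ≤ (V ×ˢ V).card := (card_le_card hsub).trans card_image_le
    _ = V.card ^ 2 := by rw [card_product, sq]
    _ ≤ (2 ^ (freeSet x).card) ^ 2 := Nat.pow_le_pow_left (card_vertices_le x) 2

end Edges

section Probability

variable {n : ℕ} {p : ℝ}

def eventProb (n : ℕ) (p : ℝ) (E : (TwoFace n → Bool) → Prop) [DecidablePred E] : ℝ :=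
  ∑ ω ∈ univ.filter E, faceProb n p ω

lemma faceProb_nonneg (hp0 : 0 ≤ p) (hp1 : p ≤ 1) (ω : TwoFace n → Bool) :
    0 ≤ faceProb n p ω :=
  prod_nonneg fun x _ => by split <;> linarith

lemma eventProb_nonneg (hp0 : 0 ≤ p) (hp1 : p ≤ 1) (E : (TwoFace n → Bool) → Prop)
    [DecidablePred E] : 0 ≤ eventProb n p E :=
  sum_nonneg fun ω _ => faceProb_nonneg hp0 hp1 ω

lemma eventProb_forall_absent (S : Finset (TwoFace n)) :
    eventProb n p (fun ω => ∀ x ∈ S, ω x = false) = (1 - p) ^ S.card := by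
  have hE : univ.filter (fun ω : TwoFace n → Bool => ∀ x ∈ S, ω x = false) =
      Fintype.piFinset fun x => if x ∈ S then {false} else univ := by
    ext ω
    simp only [mem_filter, mem_univ, true_and, Fintype.mem_piFinset]
    refine ⟨fun h x => ?_, fun h x hx => by simpa [hx] using h x⟩
    split_ifs with hx
    · simp [h x hx]
    · exact mem_univ _
  rw [eventProb, hE]
  unfold faceProb
  rw [← prod_univ_sum _ fun _ b => if b = true then p else 1 - p]
  calc ∏ x, ∑ b ∈ (if x ∈ S then {false} else univ), (if b = true then p else 1 - p)
      = ∏ x, if x ∈ S then 1 - p else 1 :=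
        prod_congr rfl fun x _ => by by_cases hx : x ∈ S <;> simp [hx]
    _ = (1 - p) ^ S.card := by rw [prod_ite_mem, univ_inter, prod_const]

lemma sum_faceProb : ∑ ω, faceProb n p ω = 1 := by
  simpa [eventProb] using eventProb_forall_absent (n := n) (p := p) ∅

lemma eventProb_not (E : (TwoFace n → Bool) → Prop) [DecidablePred E] :
    eventProb n p (fun ω => ¬ E ω) = 1 - eventProb n p E := by
  rw [eventProb, eventProb, ← sum_faceProb (n := n) (p := p),
    ← sum_filter_add_sum_filter_not univ E]
  ring

lemma eventProb_mono (hp0 : 0 ≤ p) (hp1 : p ≤ 1) {E F : (TwoFace n → Bool) → Prop}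
    [DecidablePred E] [DecidablePred F] (h : ∀ ω, E ω → F ω) : eventProb n p E ≤ eventProb n p F :=
  sum_le_sum_of_subset_of_nonneg (monotone_filter_right _ fun ω _ => h ω) fun ω _ _ =>
    faceProb_nonneg hp0 hp1 ω

lemma eventProb_exists_le (hp0 : 0 ≤ p) (hp1 : p ≤ 1) {ι : Type*} (I : Finset ι)
    (E : ι → (TwoFace n → Bool) → Prop) [∀ i, DecidablePred (E i)] :
    eventProb n p (fun ω => ∃ i ∈ I, E i ω) ≤ ∑ i ∈ I, eventProb n p (E i) := by
  simp only [eventProb, sum_filter]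
  rw [sum_comm]
  refine sum_le_sum fun ω _ => ?_
  have hterm : ∀ i, 0 ≤ if E i ω then faceProb n p ω else 0 := fun i =>
    ite_nonneg (faceProb_nonneg hp0 hp1 ω) le_rfl
  split_ifs with h
  · obtain ⟨i, hi, hE⟩ := h
    calc faceProb n p ω = if E i ω then faceProb n p ω else 0 := (if_pos hE).symm
      _ ≤ _ := single_le_sum (fun j _ => hterm j) hi
  · exact sum_nonneg fun i _ => hterm i

/-- At most `m` present faces in `U` means that some `N - m` faces of a fixed `N`-subset of `U`
are absent. -/
lemma eventProb_card_present_le (hp0 : 0 ≤ p) (hp1 : p ≤ 1) (U : Finset (TwoFace n))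
    {m N : ℕ} (hm : m ≤ N) (hN : N ≤ U.card) :
    eventProb n p (fun ω => (U.filter fun x => ω x = true).card ≤ m) ≤
      N.choose m * (1 - p) ^ (N - m) := by
  obtain ⟨U', hU', hcard⟩ := exists_subset_card_eq hN
  have hcover : ∀ ω : TwoFace n → Bool, (U.filter fun x => ω x = true).card ≤ m →
      ∃ T ∈ U'.powersetCard (N - m), ∀ x ∈ T, ω x = false := by
    intro ω hω
    have hpresent := (card_le_card (filter_subset_filter (fun x => ω x = true) hU')).trans hω
    have hsplit := card_filter_add_card_filter_not (s := U') (fun x => ω x = true)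
    obtain ⟨T, hT, hTcard⟩ :=
      exists_subset_card_eq (s := U'.filter fun x => ¬ ω x = true) (n := N - m) (by omega)
    refine ⟨T, mem_powersetCard.mpr ⟨hT.trans (filter_subset _ _), hTcard⟩, fun x hx => ?_⟩
    simpa using (mem_filter.mp (hT hx)).2
  calc _ ≤ eventProb n p (fun ω => ∃ T ∈ U'.powersetCard (N - m), ∀ x ∈ T, ω x = false) :=
        eventProb_mono hp0 hp1 hcover
    _ ≤ ∑ T ∈ U'.powersetCard (N - m), eventProb n p (fun ω => ∀ x ∈ T, ω x = false) :=
        eventProb_exists_le hp0 hp1 _ _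
    _ = N.choose m * (1 - p) ^ (N - m) := by
        rw [sum_congr rfl fun T hT => by rw [eventProb_forall_absent, (mem_powersetCard.mp hT).2],
          sum_const, card_powersetCard, hcard, Nat.choose_symm hm, nsmul_eq_mul]

end Probability

section CloseLightEdges

variable {n : ℕ} {p : ℝ}

/-- Two distinct edges have at least `2n - 3` cofaces in total, and both are light only if at most
`2M` of those are present. -/
lemma eventProb_light_pair_le (hp0 : 0 ≤ p) (hp1 : p ≤ 1) {M : ℕ} {e₁ e₂ : Sym2 (Fin n → Bool)}
    (h₁ : e₁ ∈ (cubeGraph n).edgeFinset) (h₂ : e₂ ∈ (cubeGraph n).edgeFinset) (hne : e₁ ≠ e₂)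
    (hM : 2 * M ≤ 2 * n - 3) :
    eventProb n p (fun ω => edgeDeg n ω e₁ ≤ M ∧ edgeDeg n ω e₂ ≤ M) ≤
      (2 * n - 3).choose (2 * M) * (1 - p) ^ (2 * n - 3 - 2 * M) := by
  have hU : 2 * n - 3 ≤ (cofaces e₁ ∪ cofaces e₂).card := by
    have := card_union_add_card_inter (cofaces e₁) (cofaces e₂)
    have := le_card_cofaces h₁
    have := le_card_cofaces h₂
    have := card_cofaces_inter_le_one h₁ h₂ hne
    omega
  refine (eventProb_mono hp0 hp1 fun ω hω => ?_).trans (eventProb_card_present_le hp0 hp1 _ hM hU)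
  rw [edgeDeg_eq_card_filter_cofaces, edgeDeg_eq_card_filter_cofaces] at hω
  calc ((cofaces e₁ ∪ cofaces e₂).filter fun x => ω x = true).card
      ≤ ((cofaces e₁).filter fun x => ω x = true).card +
        ((cofaces e₂).filter fun x => ω x = true).card := by
        rw [filter_union]; exact card_union_le _ _
    _ ≤ 2 * M := by omega

def closeEdgePairs (n : ℕ) :
    Finset (Σ _ : ThreeFace n, Sym2 (Fin n → Bool) × Sym2 (Fin n → Bool)) :=
  univ.sigma fun c => (edgesIn c.1 ×ˢ edgesIn c.1).filter fun e => e.1 ≠ e.2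

lemma card_closeEdgePairs_le : (closeEdgePairs n).card ≤ 4096 * n ^ 3 * 2 ^ n := by
  have hc : ∀ c : ThreeFace n,
      ((edgesIn c.1 ×ˢ edgesIn c.1).filter fun e => e.1 ≠ e.2).card ≤ 4096 := fun c =>
    calc _ ≤ (edgesIn c.1).card * (edgesIn c.1).card :=
          (card_filter_le _ _).trans_eq (card_product _ _)
      _ ≤ (2 ^ 3) ^ 2 * (2 ^ 3) ^ 2 := by
          have h3 : (freeSet c.1).card = 3 := c.2
          have := card_edgesIn_le c.1
          rw [h3] at this
          exact Nat.mul_le_mul this this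
      _ = 4096 := by norm_num
  calc (closeEdgePairs n).card ≤ Fintype.card (ThreeFace n) * 4096 := by
        rw [closeEdgePairs, card_sigma]
        exact (sum_le_card_nsmul _ _ _ fun c _ => hc c).trans_eq (by simp)
    _ ≤ n.choose 3 * 2 ^ n * 4096 := Nat.mul_le_mul_right _ (card_faces_le 3)
    _ ≤ n ^ 3 * 2 ^ n * 4096 := by gcongr; exact Nat.choose_le_pow _ _
    _ = 4096 * n ^ 3 * 2 ^ n := by ring

def HasCloseLightEdges (n M : ℕ) (ω : TwoFace n → Bool) : Prop :=
  ∃ t ∈ closeEdgePairs n, edgeDeg n ω t.2.1 ≤ M ∧ edgeDeg n ω t.2.2 ≤ M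

lemma not_hasCloseLightEdges_iff {M : ℕ} {ω : TwoFace n → Bool} :
    ¬ HasCloseLightEdges n M ω ↔
      ∀ c : ThreeFace n, ∀ e₁ ∈ (cubeGraph n).edgeFinset, ∀ e₂ ∈ (cubeGraph n).edgeFinset,
        e₁ ≠ e₂ → (∀ v, v ∈ e₁ → inFace c.1 v) → (∀ v, v ∈ e₂ → inFace c.1 v) →
        ¬ (edgeDeg n ω e₁ ≤ M ∧ edgeDeg n ω e₂ ≤ M) := by
  simp only [HasCloseLightEdges, closeEdgePairs, edgesIn, mem_sigma, mem_filter, mem_product,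
    mem_univ, true_and, Sigma.exists, Prod.exists, not_exists, not_and]
  exact ⟨fun h c e₁ h₁ e₂ h₂ hne i₁ i₂ => h c e₁ e₂ ⟨⟨⟨h₁, i₁⟩, h₂, i₂⟩, hne⟩,
    fun h c e₁ e₂ ⟨⟨⟨h₁, i₁⟩, h₂, i₂⟩, hne⟩ => h c e₁ h₁ e₂ h₂ hne i₁ i₂⟩

lemma eventProb_hasCloseLightEdges_le (hp0 : 0 ≤ p) (hp1 : p ≤ 1) {M : ℕ} (hn : M + 2 ≤ n) :
    eventProb n p (HasCloseLightEdges n M) ≤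
      4096 * 4 ^ M * ((n : ℝ) ^ (2 * M + 3) * 2 ^ n * (1 - p) ^ (2 * n - (2 * M + 3))) := by
  have hT : ((closeEdgePairs n).card : ℝ) ≤ 4096 * n ^ 3 * 2 ^ n := by
    exact_mod_cast card_closeEdgePairs_le
  have hchoose : (((2 * n - 3).choose (2 * M) : ℕ) : ℝ) ≤ 4 ^ M * n ^ (2 * M) := by
    have h : (2 * n - 3).choose (2 * M) ≤ (2 * n) ^ (2 * M) :=
      (Nat.choose_le_pow _ _).trans (Nat.pow_le_pow_left (Nat.sub_le _ _) _)
    calc (((2 * n - 3).choose (2 * M) : ℕ) : ℝ) ≤ ((2 * n : ℕ) : ℝ) ^ (2 * M) := by exact_mod_cast h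
      _ = 4 ^ M * n ^ (2 * M) := by push_cast; rw [mul_pow, pow_mul]; norm_num
  have hq : 0 ≤ 1 - p := sub_nonneg.mpr hp1
  calc eventProb n p (HasCloseLightEdges n M)
      ≤ eventProb n p
          (fun ω => ∃ t ∈ closeEdgePairs n, edgeDeg n ω t.2.1 ≤ M ∧ edgeDeg n ω t.2.2 ≤ M) :=
        eventProb_mono hp0 hp1 fun _ h => h
    _ ≤ ∑ t ∈ closeEdgePairs n,
          eventProb n p (fun ω => edgeDeg n ω t.2.1 ≤ M ∧ edgeDeg n ω t.2.2 ≤ M) :=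
        eventProb_exists_le hp0 hp1 _ _
    _ ≤ ∑ t ∈ closeEdgePairs n, (2 * n - 3).choose (2 * M) * (1 - p) ^ (2 * n - 3 - 2 * M) := by
        refine sum_le_sum fun t ht => ?_
        simp only [closeEdgePairs, mem_sigma, mem_filter, mem_product, edgesIn] at ht
        exact eventProb_light_pair_le hp0 hp1 ht.2.1.1.1 ht.2.1.2.1 ht.2.2 (by omega)
    _ = (closeEdgePairs n).card *
          ((2 * n - 3).choose (2 * M) * (1 - p) ^ (2 * n - (2 * M + 3))) := by
        rw [sum_const, nsmul_eq_mul, Nat.sub_sub, add_comm 3]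
    _ ≤ (4096 * n ^ 3 * 2 ^ n) * (4 ^ M * n ^ (2 * M) * (1 - p) ^ (2 * n - (2 * M + 3))) := by
        gcongr
    _ = 4096 * 4 ^ M * ((n : ℝ) ^ (2 * M + 3) * 2 ^ n * (1 - p) ^ (2 * n - (2 * M + 3))) := by
        ring

end CloseLightEdges

lemma tendsto_pow_mul_two_pow_mul_pow_sub {q : ℝ} (hq0 : 0 ≤ q) (hq : 2 * q ^ 2 < 1) (a k : ℕ) :
    Tendsto (fun n : ℕ => (n : ℝ) ^ a * 2 ^ n * q ^ (2 * n - k)) atTop (𝓝 0) := by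
  set r := max q (1 / 2)
  have hr0 : 0 < r := lt_max_of_lt_right (by norm_num)
  have hr : 2 * r ^ 2 < 1 := by
    obtain h | h := max_choice q (1 / 2) <;> rw [show r = _ from h] <;> [exact hq; norm_num]
  have hlim : Tendsto (fun n : ℕ => (r ^ k)⁻¹ * ((n : ℝ) ^ a * (2 * r ^ 2) ^ n)) atTop (𝓝 0) := by
    simpa using (tendsto_pow_const_mul_const_pow_of_lt_one a (by positivity) hr).const_mul
      (r ^ k)⁻¹
  refine squeeze_zero' (Eventually.of_forall fun n => by positivity) ?_ hlim
  filter_upwards [eventually_ge_atTop k] with n hn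
  calc (n : ℝ) ^ a * 2 ^ n * q ^ (2 * n - k) ≤ (n : ℝ) ^ a * 2 ^ n * r ^ (2 * n - k) := by
        gcongr; exact le_max_left _ _
    _ = (r ^ k)⁻¹ * ((n : ℝ) ^ a * (2 * r ^ 2) ^ n) := by
        rw [pow_sub₀ _ hr0.ne' (by omega), mul_pow, ← pow_mul]
        ring

open scoped Classical in
theorem no_close_light_edges_whp (p : ℝ) (hp : 1 - Real.sqrt (1 / 2) < p) (hp1 : p ≤ 1)
    (M : ℕ) :
    Filter.Tendsto
      (fun n : ℕ =>
        ∑ ω ∈ Finset.univ.filter fun ω : TwoFace n → Bool =>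
            ∀ c : ThreeFace n, ∀ e₁ ∈ (cubeGraph n).edgeFinset,
              ∀ e₂ ∈ (cubeGraph n).edgeFinset, e₁ ≠ e₂ →
              (∀ v, v ∈ e₁ → inFace c.1 v) → (∀ v, v ∈ e₂ → inFace c.1 v) →
              ¬ (edgeDeg n ω e₁ ≤ M ∧ edgeDeg n ω e₂ ≤ M),
          faceProb n p ω)
      Filter.atTop (nhds 1) := by
  have hq : 0 ≤ 1 - p := sub_nonneg.mpr hp1
  have hp0 : 0 ≤ p := by linarith [Real.sqrt_le_one.mpr (by norm_num : (1 / 2 : ℝ) ≤ 1)]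
  have hq2 : 2 * (1 - p) ^ 2 < 1 := by
    linarith [(Real.lt_sqrt hq).mp (by linarith : 1 - p < Real.sqrt (1 / 2))]
  have hlower := ((tendsto_pow_mul_two_pow_mul_pow_sub hq hq2 (2 * M + 3) (2 * M + 3)).const_mul
    (4096 * 4 ^ M)).const_sub 1
  rw [mul_zero, sub_zero] at hlower
  refine Tendsto.congr (f₁ := fun n => 1 - eventProb n p (HasCloseLightEdges n M))
    (fun n => ?_) (tendsto_of_tendsto_of_tendsto_of_le_of_le' hlower tendsto_const_nhds ?_ ?_)
  · rw [← eventProb_not, eventProb]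
    exact sum_congr (filter_congr fun _ _ => not_hasCloseLightEdges_iff) fun _ _ => rfl
  · filter_upwards [eventually_ge_atTop (M + 2)] with n hn
    linarith [eventProb_hasCloseLightEdges_le (p := p) hp0 hp1 hn]
  · exact Eventually.of_forall fun n => sub_le_self _ (eventProb_nonneg hp0 hp1 _)
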